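/- Let X be a metric space and G a group acting on X by isometries such that there is a compact subset K of X with G·K = X, and such that the action is metrically proper: for every r > 0, the set {g ∈ G : g·K^{+r} ∩ K^{+r} ≠ ∅} is finite. Assume G is residually finite. Let Y ⊆ X and let Stab(Y) = {g ∈ G : gY = Y}. Then for every ρ > 0 there exists a finite-index normal subgroup H of Stab(Y) such that for every h ∈ H with h ≠ 1 and every x ∈ X, d(x, h·x) ≥ ρ; that is, the injectivity radius of H on X, inf over nontrivial h ∈ H of inf over x ∈ X of d(x, hx), is at least ρ. -/

import Mathlib

/-!
Fix `ρ > 0`. By metric properness only finitely many `g ∈ G` move some point of `K^{+ρ}` back into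
`K^{+ρ}`; residual finiteness gives a finite-index normal subgroup `N` of `G` missing all the
nontrivial ones. If `h ∈ N` moved some `x = g • k` (with `k ∈ K`) by less than `ρ`, then
`g⁻¹ h g ∈ N` would move `k` by less than `ρ`, so it would be one of those finitely many elements,
hence trivial. The answer is `N ∩ Stab(Y)`.
-/

open Pointwise

/-- The `r`-neighbourhood `K^{+r}` of a subset. -/
def nbhd {X : Type*} [MetricSpace X] (r : ℝ) (K : Set X) : Set X :=
  {x | ∃ k ∈ K, dist x k ≤ r}

theorem Group.exists_normal_finiteIndex_forall_notMem {G : Type*} [Group G]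
    [Group.ResiduallyFinite G] {S : Set G} (hS : S.Finite) :
    ∃ N : Subgroup G, N.Normal ∧ N.FiniteIndex ∧ ∀ g ∈ S, g ≠ 1 → g ∉ N := by
  induction S, hS using Set.Finite.induction_on with
  | empty => exact ⟨⊤, inferInstance, inferInstance, by simp⟩
  | @insert a S _ _ ih =>
    obtain ⟨N, hN, hNfin, hNS⟩ := ih
    by_cases ha : a = 1
    · exact ⟨N, hN, hNfin, by simpa [ha] using hNS⟩
    obtain ⟨M, hMfin, haM⟩ := Group.residuallyFinite_iff_exists_finiteIndex.mp ‹_› a ha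
    refine ⟨N ⊓ M.normalCore, inferInstance, inferInstance, ?_⟩
    rintro g (rfl | hg) hg1 hgNM
    · exact haM (M.normalCore_le hgNM.2)
    · exact hNS g hg hg1 hgNM.1

theorem exists_conj_mem_of_dist_smul_le {X G : Type*} [MetricSpace X] [Group G] [MulAction G X]
    [IsIsometricSMul G X] {K : Set X} (hKcov : ⋃ g : G, g • K = Set.univ) {r : ℝ} (hr : 0 ≤ r)
    {h : G} {x : X} (hx : dist x (h • x) ≤ r) :
    ∃ g : G, g * h * g⁻¹ ∈ {g : G | (g • nbhd r K) ∩ nbhd r K ≠ ∅} := by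
  obtain ⟨_, ⟨g, rfl⟩, k, hk, rfl⟩ : x ∈ ⋃ g : G, g • K := hKcov ▸ Set.mem_univ x
  have hk_move : dist ((g⁻¹ * h * g) • k) k ≤ r := by
    rwa [dist_comm, ← dist_smul g, mul_smul, mul_smul, smul_inv_smul]
  refine ⟨g⁻¹, ?_⟩
  rw [inv_inv, Set.mem_ofPred_eq, ← Set.nonempty_iff_ne_empty]
  exact ⟨_, ⟨k, ⟨k, hk, by simpa using hr⟩, rfl⟩, k, hk, hk_move⟩

theorem exists_finiteIndex_normal_subgroup_large_injectivity_radius_general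
    {X : Type*} [MetricSpace X] {G : Type*} [Group G] [MulAction G X]
    (hiso : ∀ g : G, Isometry (fun x : X => g • x))
    (K : Set X) (hKcov : (⋃ g : G, g • K) = Set.univ)
    (hproper : ∀ r > (0 : ℝ),
      Set.Finite {g : G | (g • nbhd r K) ∩ nbhd r K ≠ ∅})
    (hresfin : ∀ g : G, g ≠ 1 →
      ∃ N : Subgroup G, N.Normal ∧ N.FiniteIndex ∧ g ∉ N)
    (Y : Set X) (ρ : ℝ) (hρ : 0 < ρ) :
    ∃ H : Subgroup ↥(MulAction.stabilizer G Y), H.Normal ∧ H.FiniteIndex ∧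
      ∀ h : ↥(MulAction.stabilizer G Y), h ∈ H → (h : G) ≠ 1 →
        ∀ x : X, ρ ≤ dist x ((h : G) • x) := by
  have : IsIsometricSMul G X := ⟨hiso⟩
  have : Group.ResiduallyFinite G := Group.residuallyFinite_iff_exists_finiteIndex.mpr
    fun g hg ↦ (hresfin g hg).imp fun _ hN ↦ hN.2
  obtain ⟨N, hN, hNfin, hNS⟩ := Group.exists_normal_finiteIndex_forall_notMem (hproper ρ hρ)
  refine ⟨N.subgroupOf _, hN.subgroupOf _, inferInstance, fun h hhN hh1 x ↦ ?_⟩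
  by_contra! hx
  obtain ⟨g, hg⟩ := exists_conj_mem_of_dist_smul_le hKcov hρ.le hx.le
  exact hNS _ hg (by simpa [mul_inv_eq_one] using hh1) (hN.conj_mem _ hhN g)

/-- if a residually finite group `G` acts by isometries on `X`,
cocompactly (`G·K = X` with `K` compact) and metrically properly, then for
every `ρ > 0` the stabilizer of any subset `Y` has a finite-index normal
subgroup all of whose nontrivial elements move every point by at least `ρ`. -/
theorem exists_finiteIndex_normal_subgroup_large_injectivity_radius
    {X : Type*} [MetricSpace X] {G : Type*} [Group G] [MulAction G X]
    (hiso : ∀ g : G, Isometry (fun x : X => g • x))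
    (K : Set X) (hK : IsCompact K) (hKcov : (⋃ g : G, g • K) = Set.univ)
    (hproper : ∀ r > (0 : ℝ),
      Set.Finite {g : G | (g • nbhd r K) ∩ nbhd r K ≠ ∅})
    (hresfin : ∀ g : G, g ≠ 1 →
      ∃ N : Subgroup G, N.Normal ∧ N.FiniteIndex ∧ g ∉ N)
    (Y : Set X) (ρ : ℝ) (hρ : 0 < ρ) :
    ∃ H : Subgroup ↥(MulAction.stabilizer G Y), H.Normal ∧ H.FiniteIndex ∧
      ∀ h : ↥(MulAction.stabilizer G Y), h ∈ H → (h : G) ≠ 1 →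
        ∀ x : X, ρ ≤ dist x ((h : G) • x) :=
  exists_finiteIndex_normal_subgroup_large_injectivity_radius_general hiso K hKcov hproper hresfin Y
    ρ hρ
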